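/- arXiv:2106.14240 — 6 statements merged into one kernel-verified Lean document; each statement's English description precedes it below -/
import Mathlib

section
/- The map C(u,v) = uv + (u-v)·min(u,v)·min(1-u,1-v) on [0,1]² is a bivariate copula, i.e., it satisfies C(u,0)=C(0,v)=0, C(u,1)=u, C(1,v)=v, and is 2-increasing (nonnegative volume on every rectangle in [0,1]²). -/
open Set

def IsCopula (C : ℝ → ℝ → ℝ) : Prop :=
  (∀ u ∈ Icc (0:ℝ) 1, C u 0 = 0) ∧
  (∀ v ∈ Icc (0:ℝ) 1, C 0 v = 0) ∧
  (∀ u ∈ Icc (0:ℝ) 1, C u 1 = u) ∧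
  (∀ v ∈ Icc (0:ℝ) 1, C 1 v = v) ∧
  (∀ u ∈ Icc (0:ℝ) 1, ∀ v ∈ Icc (0:ℝ) 1, C u v ∈ Icc (0:ℝ) 1) ∧
  (∀ u₁ ∈ Icc (0:ℝ) 1, ∀ u₂ ∈ Icc (0:ℝ) 1, ∀ v₁ ∈ Icc (0:ℝ) 1, ∀ v₂ ∈ Icc (0:ℝ) 1,
    u₁ ≤ u₂ → v₁ ≤ v₂ → 0 ≤ C u₂ v₂ - C u₂ v₁ - C u₁ v₂ + C u₁ v₁)

private lemma Cle (u v : ℝ) (h : u ≤ v) :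
    u * v + (u - v) * min u v * min (1 - u) (1 - v)
      = u * v + (u - v) * u * (1 - v) := by
  rw [min_eq_left h, min_eq_right (by linarith)]

private lemma Cge (u v : ℝ) (h : v ≤ u) :
    u * v + (u - v) * min u v * min (1 - u) (1 - v)
      = u * v + (u - v) * v * (1 - u) := by
  rw [min_eq_right h, min_eq_left (by linarith)]

theorem stmt0 :
    IsCopula (fun u v => u * v + (u - v) * min u v * min (1 - u) (1 - v)) := by
  refine ⟨?_, ?_, ?_, ?_, ?_, ?_⟩
  · rintro u ⟨h0, h1⟩
    simp only [Cge u 0 h0]; ring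
  · rintro v ⟨h0, h1⟩
    simp only [Cle 0 v h0]; ring
  · rintro u ⟨h0, h1⟩
    simp only [Cle u 1 h1]; ring
  · rintro v ⟨h0, h1⟩
    simp only [Cge 1 v h1]; ring
  · rintro u ⟨u0, u1⟩ v ⟨v0, v1⟩
    rcases le_total u v with h | h
    · simp only [Cle u v h]
      constructor
      · nlinarith [mul_nonneg u0 v0, mul_nonneg (sub_nonneg.2 h) (sub_nonneg.2 v1),
          mul_nonneg u0 (sub_nonneg.2 v1)]
      · nlinarith [mul_nonneg u0 v0, mul_nonneg (sub_nonneg.2 h) (sub_nonneg.2 v1)]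
    · simp only [Cge u v h]
      constructor
      · nlinarith [mul_nonneg v0 (sub_nonneg.2 h), mul_nonneg v0 (sub_nonneg.2 u1)]
      · nlinarith [mul_nonneg (mul_nonneg v0 (sub_nonneg.2 u1)) (sub_nonneg.2 (show u - v ≤ 1 by linarith)),
          mul_nonneg v0 (sub_nonneg.2 u1)]
  · rintro u₁ ⟨hu₁0, hu₁1⟩ u₂ ⟨hu₂0, hu₂1⟩ v₁ ⟨hv₁0, hv₁1⟩ v₂ ⟨hv₂0, hv₂1⟩ hu hv
    simp only
    rcases le_total u₂ v₁ with h21 | h21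
    · -- u₁ ≤ u₂ ≤ v₁ ≤ v₂ : all f
      rw [Cle u₂ v₂ (by linarith), Cle u₂ v₁ h21, Cle u₁ v₂ (by linarith),
        Cle u₁ v₁ (by linarith)]
      nlinarith [mul_nonneg (sub_nonneg.2 hu) (sub_nonneg.2 hv),
        mul_nonneg (mul_nonneg (sub_nonneg.2 hu) (sub_nonneg.2 hv))
          (sub_nonneg.2 (show u₁ + u₂ ≤ v₁ + v₂ by linarith))]
    · rcases le_total v₂ u₁ with h12 | h12
      · -- v₁ ≤ v₂ ≤ u₁ ≤ u₂ : all g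
        rw [Cge u₂ v₂ (by linarith), Cge u₂ v₁ (by linarith), Cge u₁ v₂ h12,
          Cge u₁ v₁ (by linarith)]
        nlinarith [mul_nonneg (sub_nonneg.2 hu) (sub_nonneg.2 hv),
          mul_nonneg (mul_nonneg (sub_nonneg.2 hu) (sub_nonneg.2 hv))
            (sub_nonneg.2 (show v₁ + v₂ ≤ u₁ + u₂ by linarith))]
      · rcases le_total u₁ v₁ with h11 | h11
        · rcases le_total u₂ v₂ with h22 | h22
          · -- u₁ ≤ v₁ ≤ u₂ ≤ v₂
            rw [Cle u₂ v₂ h22, Cge u₂ v₁ h21, Cle u₁ v₂ (by linarith), Cle u₁ v₁ h11]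
            nlinarith [mul_nonneg (sub_nonneg.2 h21) (sub_nonneg.2 h22),
              mul_nonneg (sub_nonneg.2 h11) (sub_nonneg.2 hv),
              mul_nonneg (sub_nonneg.2 h21) (sub_nonneg.2 hv),
              sq_nonneg (u₂ - v₁), sq_nonneg (v₂ - u₂), hv₁0, hu₂1, hv₂1, hu₁0]
          · -- u₁ ≤ v₁ ≤ v₂ ≤ u₂
            rw [Cge u₂ v₂ h22, Cge u₂ v₁ h21, Cle u₁ v₂ (by linarith), Cle u₁ v₁ h11]
            nlinarith [mul_nonneg (sub_nonneg.2 h11) (sub_nonneg.2 h22),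
              mul_nonneg (sub_nonneg.2 hv) (sub_nonneg.2 h22),
              mul_nonneg (sub_nonneg.2 h11) (sub_nonneg.2 hv),
              sq_nonneg (v₂ - v₁), hv₁0, hu₂1, hu₁0, hv₂1]
        · rcases le_total u₂ v₂ with h22 | h22
          · -- v₁ ≤ u₁ ≤ u₂ ≤ v₂
            rw [Cle u₂ v₂ h22, Cge u₂ v₁ h21, Cle u₁ v₂ (by linarith), Cge u₁ v₁ h11]
            nlinarith [mul_nonneg (sub_nonneg.2 h11) (sub_nonneg.2 h22),
              mul_nonneg (sub_nonneg.2 hu) (sub_nonneg.2 h22),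
              mul_nonneg (sub_nonneg.2 h11) (sub_nonneg.2 hu),
              sq_nonneg (u₂ - u₁), hu₁0, hv₂1, hv₁0, hu₂1]
          · -- v₁ ≤ u₁ ≤ v₂ ≤ u₂
            rw [Cge u₂ v₂ h22, Cge u₂ v₁ h21, Cle u₁ v₂ (by linarith), Cge u₁ v₁ h11]
            nlinarith [mul_nonneg (sub_nonneg.2 h11) (sub_nonneg.2 h22),
              mul_nonneg (sub_nonneg.2 hu) (sub_nonneg.2 hv),
              mul_nonneg (sub_nonneg.2 h11) (sub_nonneg.2 hv),
              sq_nonneg (v₂ - u₁), sq_nonneg (u₂ - v₂), hv₁0, hu₂1, hu₁0, hv₂1]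
end

section
/- The map C(u,v) = uv + (u+v-1)·min(1-u,v)·min(u,1-v) on [0,1]² is a bivariate copula. -/
open Set

lemma Cval (u v : ℝ) (hu : u ∈ Icc (0:ℝ) 1) (hv : v ∈ Icc (0:ℝ) 1) :
    u * v + (u + v - 1) * min (1 - u) v * min u (1 - v)
      = u * v * (u + v) - max (u + v - 1) 0 ^ 2 := by
  obtain ⟨hu0, hu1⟩ := hu
  obtain ⟨hv0, hv1⟩ := hv
  rcases le_total (u + v) 1 with h | h
  · rw [min_eq_right (by linarith), min_eq_left (by linarith),
      max_eq_right (by linarith)]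
    ring
  · rw [min_eq_left (by linarith), min_eq_right (by linarith),
      max_eq_left (by linarith)]
    ring

lemma Cvol (a b c d : ℝ) (ha : a ∈ Icc (0:ℝ) 1) (hb : b ∈ Icc (0:ℝ) 1)
    (hc : c ∈ Icc (0:ℝ) 1) (hd : d ∈ Icc (0:ℝ) 1) (hab : a ≤ b) (hcd : c ≤ d) :
    0 ≤ (b * d * (b + d) - max (b + d - 1) 0 ^ 2)
      - (b * c * (b + c) - max (b + c - 1) 0 ^ 2)
      - (a * d * (a + d) - max (a + d - 1) 0 ^ 2)
      + (a * c * (a + c) - max (a + c - 1) 0 ^ 2) := by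
  obtain ⟨ha0, ha1⟩ := ha
  obtain ⟨hb0, hb1⟩ := hb
  obtain ⟨hc0, hc1⟩ := hc
  obtain ⟨hd0, hd1⟩ := hd
  rcases le_total (b + d) 1 with h22 | h22
  · rw [max_eq_right (by linarith : b + d - 1 ≤ 0),
      max_eq_right (by linarith : b + c - 1 ≤ 0),
      max_eq_right (by linarith : a + d - 1 ≤ 0),
      max_eq_right (by linarith : a + c - 1 ≤ 0)]
    nlinarith [mul_nonneg (sub_nonneg.2 hab) (sub_nonneg.2 hcd), mul_nonneg ha0 hc0]
  · rw [max_eq_left (by linarith : 0 ≤ b + d - 1)]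
    rcases le_total (a + c) 1 with h11 | h11
    · rcases le_total (b + c) 1 with h21 | h21 <;>
        rcases le_total (a + d) 1 with h12 | h12
      · rw [max_eq_right (by linarith : b + c - 1 ≤ 0),
          max_eq_right (by linarith : a + d - 1 ≤ 0),
          max_eq_right (by linarith : a + c - 1 ≤ 0)]
        nlinarith [mul_nonneg (sub_nonneg.2 hab) (sub_nonneg.2 hcd),
          mul_nonneg (sub_nonneg.2 hcd) (sub_nonneg.2 h21),
          mul_nonneg (sub_nonneg.2 hab) (sub_nonneg.2 h12),
          sq_nonneg (b + d - 1), mul_nonneg hb0 hd0,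
          mul_nonneg ha0 hc0, mul_nonneg (sub_nonneg.2 h21) (sub_nonneg.2 h12)]
      · rw [max_eq_right (by linarith : b + c - 1 ≤ 0),
          max_eq_left (by linarith : 0 ≤ a + d - 1),
          max_eq_right (by linarith : a + c - 1 ≤ 0)]
        nlinarith [mul_nonneg (sub_nonneg.2 hab)
            (mul_nonneg (by linarith : (0:ℝ) ≤ 1 - a - c) (by linarith : (0:ℝ) ≤ 1 - d + c)),
          mul_nonneg (sub_nonneg.2 hab)
            (mul_nonneg (by linarith : (0:ℝ) ≤ 1 - b - c) (by linarith : (0:ℝ) ≤ 1 - d + c)),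
          mul_nonneg (sub_nonneg.2 hab) (sq_nonneg (d - c))]
      · rw [max_eq_left (by linarith : 0 ≤ b + c - 1),
          max_eq_right (by linarith : a + d - 1 ≤ 0),
          max_eq_right (by linarith : a + c - 1 ≤ 0)]
        nlinarith [mul_nonneg (sub_nonneg.2 hcd)
            (mul_nonneg (by linarith : (0:ℝ) ≤ 1 - a - c) (by linarith : (0:ℝ) ≤ 1 - b + a)),
          mul_nonneg (sub_nonneg.2 hcd)
            (mul_nonneg (by linarith : (0:ℝ) ≤ 1 - a - d) (by linarith : (0:ℝ) ≤ 1 - b + a)),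
          mul_nonneg (sub_nonneg.2 hcd) (sq_nonneg (b - a))]
      · rw [max_eq_left (by linarith : 0 ≤ b + c - 1),
          max_eq_left (by linarith : 0 ≤ a + d - 1),
          max_eq_right (by linarith : a + c - 1 ≤ 0)]
        nlinarith [mul_nonneg (sub_nonneg.2 hab) (sub_nonneg.2 hcd),
          mul_nonneg (sub_nonneg.2 h11) (sub_nonneg.2 (by linarith : (1:ℝ) ≤ b + c)),
          mul_nonneg (sub_nonneg.2 h11) (sub_nonneg.2 (by linarith : (1:ℝ) ≤ a + d)),
          mul_nonneg (sub_nonneg.2 (by linarith : (1:ℝ) ≤ b + c))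
            (sub_nonneg.2 (by linarith : (1:ℝ) ≤ a + d)),
          mul_nonneg ha0 hc0, mul_nonneg hb0 hd0]
    · rw [max_eq_left (by linarith : 0 ≤ b + c - 1),
        max_eq_left (by linarith : 0 ≤ a + d - 1),
        max_eq_left (by linarith : 0 ≤ a + c - 1)]
      nlinarith [mul_nonneg (sub_nonneg.2 hab) (sub_nonneg.2 hcd),
        mul_nonneg (mul_nonneg (sub_nonneg.2 hab) (sub_nonneg.2 hcd))
          (sub_nonneg.2 (by linarith : (2:ℝ) ≤ a + b + c + d))]

theorem stmt1 :
    IsCopula (fun u v => u * v + (u + v - 1) * min (1 - u) v * min u (1 - v)) := by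
  have key : ∀ u₁ ∈ Icc (0:ℝ) 1, ∀ u₂ ∈ Icc (0:ℝ) 1, ∀ v₁ ∈ Icc (0:ℝ) 1, ∀ v₂ ∈ Icc (0:ℝ) 1,
      u₁ ≤ u₂ → v₁ ≤ v₂ → 0 ≤
        (u₂ * v₂ + (u₂ + v₂ - 1) * min (1 - u₂) v₂ * min u₂ (1 - v₂))
        - (u₂ * v₁ + (u₂ + v₁ - 1) * min (1 - u₂) v₁ * min u₂ (1 - v₁))
        - (u₁ * v₂ + (u₁ + v₂ - 1) * min (1 - u₁) v₂ * min u₁ (1 - v₂))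
        + (u₁ * v₁ + (u₁ + v₁ - 1) * min (1 - u₁) v₁ * min u₁ (1 - v₁)) := by
    intro a ha b hb c hc d hd hab hcd
    rw [Cval a c ha hc, Cval a d ha hd, Cval b c hb hc, Cval b d hb hd]
    exact Cvol a b c d ha hb hc hd hab hcd
  have b0 : ∀ u ∈ Icc (0:ℝ) 1,
      u * (0:ℝ) + (u + 0 - 1) * min (1 - u) 0 * min u (1 - 0) = 0 := by
    intro u hu
    rw [min_eq_right (by linarith [hu.2] : (0:ℝ) ≤ 1 - u)]
    ring
  have b0' : ∀ v ∈ Icc (0:ℝ) 1,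
      (0:ℝ) * v + (0 + v - 1) * min (1 - 0) v * min 0 (1 - v) = 0 := by
    intro v hv
    rw [min_eq_left (by linarith [hv.2] : (0:ℝ) ≤ 1 - v)]
    ring
  have b1 : ∀ u ∈ Icc (0:ℝ) 1,
      u * (1:ℝ) + (u + 1 - 1) * min (1 - u) 1 * min u (1 - 1) = u := by
    intro u hu
    rw [show (1:ℝ) - 1 = 0 by ring, min_eq_right hu.1]
    ring
  have b1' : ∀ v ∈ Icc (0:ℝ) 1,
      (1:ℝ) * v + (1 + v - 1) * min (1 - 1) v * min 1 (1 - v) = v := by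
    intro v hv
    rw [show (1:ℝ) - 1 = 0 by ring, min_eq_left hv.1]
    ring
  refine ⟨b0, b0', b1, b1', ?_, key⟩
  intro u hu v hv
  constructor
  · have := key 0 (by norm_num) u hu 0 (by norm_num) v hv hu.1 hv.1
    simp only at this ⊢
    rw [b0 u hu, b0' v hv, b0' 0 (by norm_num)] at this
    linarith
  · have := key 0 (by norm_num) u hu v hv 1 (by norm_num) hu.1 hv.2
    simp only at this ⊢
    rw [b1 u hu, b0' v hv, b0' 1 (by norm_num)] at this
    linarith [hu.2]
end

section
/- For every θ ∈ [-1,1], the map Π + θP, where Π(u,v)=uv and P(u,v)=(u-v)·min(u,v)·min(1-u,1-v), is a bivariate copula, and its symmetrization ((Π+θP)+(Π+θP)ᵀ)/2 equals Π. -/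
open Set

def P (u v : ℝ) : ℝ := (u - v) * min u v * min (1 - u) (1 - v)

lemma Ple (a b : ℝ) (h : a ≤ b) : P a b = (a - b) * a * (1 - b) := by
  rw [P, min_eq_left h, min_eq_right (by linarith)]

lemma Pge (a b : ℝ) (h : b ≤ a) : P a b = (a - b) * b * (1 - a) := by
  rw [P, min_eq_right h, min_eq_left (by linarith)]

lemma Pswap (u v : ℝ) : P v u = -P u v := by
  rw [P, P, min_comm v u, min_comm (1 - v) (1 - u)]; ring

lemma key (u₁ u₂ v₁ v₂ : ℝ) (hu₁ : u₁ ∈ Icc (0:ℝ) 1) (hu₂ : u₂ ∈ Icc (0:ℝ) 1)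
    (hv₁ : v₁ ∈ Icc (0:ℝ) 1) (hv₂ : v₂ ∈ Icc (0:ℝ) 1) (hu : u₁ ≤ u₂) (hv : v₁ ≤ v₂) :
    0 ≤ (u₂ - u₁) * (v₂ - v₁) + (P u₂ v₂ - P u₂ v₁ - P u₁ v₂ + P u₁ v₁) := by
  obtain ⟨a0, a1⟩ := hu₁; obtain ⟨b0, b1⟩ := hu₂
  obtain ⟨c0, c1⟩ := hv₁; obtain ⟨d0, d1⟩ := hv₂
  rcases le_total u₂ v₁ with h21 | h21
  · -- u₁ ≤ u₂ ≤ v₁ ≤ v₂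
    rw [Ple _ _ (le_trans h21 hv), Ple _ _ h21, Ple _ _ (le_trans hu (le_trans h21 hv)),
      Ple _ _ (le_trans hu h21)]
    nlinarith [mul_nonneg (sub_nonneg.2 hu) (sub_nonneg.2 hv), sq_nonneg (u₂ - u₁), sq_nonneg (v₂ - v₁), mul_nonneg a0 c0]
  · rcases le_total v₂ u₁ with h12 | h12
    · -- v₁ ≤ v₂ ≤ u₁ ≤ u₂
      rw [Pge _ _ h12, Pge _ _ (le_trans hv h12), Pge _ _ (le_trans h12 hu),
        Pge _ _ (le_trans hv (le_trans h12 hu))]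
      nlinarith [mul_nonneg (sub_nonneg.2 hu) (sub_nonneg.2 hv), sq_nonneg (u₂ - u₁), sq_nonneg (v₂ - v₁)]
    · rcases le_total u₁ v₁ with h11 | h11
      · rcases le_total u₂ v₂ with h22 | h22
        · -- u₁ ≤ v₁ ≤ u₂ ≤ v₂
          rw [Ple _ _ h22, Pge _ _ h21, Ple _ _ (le_trans h11 hv), Ple _ _ h11]
          nlinarith [mul_nonneg (sub_nonneg.2 hu) (sub_nonneg.2 hv), sq_nonneg (u₂ - v₁), mul_nonneg c0 d0]
        · -- u₁ ≤ v₁ ≤ v₂ ≤ u₂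
          rw [Pge _ _ h22, Pge _ _ h21, Ple _ _ (le_trans h11 hv), Ple _ _ h11]
          nlinarith [mul_nonneg (mul_nonneg (sub_nonneg.2 hv) (sub_nonneg.2 h22)) (by linarith : (0:ℝ) ≤ 2 - (u₂ - v₂)),
            mul_nonneg (sq_nonneg (v₂ - v₁)) (by linarith : (0:ℝ) ≤ 1 - (u₂ - v₂)),
            mul_nonneg (sub_nonneg.2 h11) (sq_nonneg (v₂ - v₁)),
            mul_nonneg (sq_nonneg (v₁ - u₁)) (sub_nonneg.2 hv)]
      · rcases le_total u₂ v₂ with h22 | h22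
        · -- v₁ ≤ u₁ ≤ u₂ ≤ v₂
          rw [Ple _ _ h22, Pge _ _ h21, Ple _ _ h12, Pge _ _ h11]
          nlinarith [mul_nonneg (sub_nonneg.2 hu) (sq_nonneg (v₂ - u₂)),
            mul_nonneg (sq_nonneg (u₂ - u₁)) (by linarith : (0:ℝ) ≤ 1 + (v₂ - u₂)),
            mul_nonneg (mul_nonneg (sub_nonneg.2 h11) (sub_nonneg.2 hu)) (by linarith : (0:ℝ) ≤ 2 - (u₂ - v₁))]
        · -- v₁ ≤ u₁ ≤ v₂ ≤ u₂
          rw [Pge _ _ h22, Pge _ _ h21, Ple _ _ h12, Pge _ _ h11]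
          nlinarith [mul_nonneg (sub_nonneg.2 hu) (sub_nonneg.2 hv), sq_nonneg (v₂ - u₁)]

lemma key' (u₁ u₂ v₁ v₂ : ℝ) (hu₁ : u₁ ∈ Icc (0:ℝ) 1) (hu₂ : u₂ ∈ Icc (0:ℝ) 1)
    (hv₁ : v₁ ∈ Icc (0:ℝ) 1) (hv₂ : v₂ ∈ Icc (0:ℝ) 1) (hu : u₁ ≤ u₂) (hv : v₁ ≤ v₂) :
    0 ≤ (u₂ - u₁) * (v₂ - v₁) - (P u₂ v₂ - P u₂ v₁ - P u₁ v₂ + P u₁ v₁) := by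
  have h := key v₁ v₂ u₁ u₂ hv₁ hv₂ hu₁ hu₂ hv hu
  rw [Pswap u₂ v₂, Pswap u₁ v₂, Pswap u₂ v₁, Pswap u₁ v₁] at h
  linarith

lemma vol (θ : ℝ) (hθ : θ ∈ Icc (-1:ℝ) 1)
    (u₁ u₂ v₁ v₂ : ℝ) (hu₁ : u₁ ∈ Icc (0:ℝ) 1) (hu₂ : u₂ ∈ Icc (0:ℝ) 1)
    (hv₁ : v₁ ∈ Icc (0:ℝ) 1) (hv₂ : v₂ ∈ Icc (0:ℝ) 1) (hu : u₁ ≤ u₂) (hv : v₁ ≤ v₂) :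
    0 ≤ (u₂ * v₂ + θ * P u₂ v₂) - (u₂ * v₁ + θ * P u₂ v₁) - (u₁ * v₂ + θ * P u₁ v₂)
      + (u₁ * v₁ + θ * P u₁ v₁) := by
  have h1 := key u₁ u₂ v₁ v₂ hu₁ hu₂ hv₁ hv₂ hu hv
  have h2 := key' u₁ u₂ v₁ v₂ hu₁ hu₂ hv₁ hv₂ hu hv
  nlinarith [mul_nonneg (by linarith [hθ.1] : (0:ℝ) ≤ 1 + θ) h1,
    mul_nonneg (by linarith [hθ.2] : (0:ℝ) ≤ 1 - θ) h2]

theorem stmt4 (θ : ℝ) (hθ : θ ∈ Icc (-1:ℝ) 1) :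
    IsCopula (fun u v => u * v + θ * P u v) ∧
    ∀ u ∈ Icc (0:ℝ) 1, ∀ v ∈ Icc (0:ℝ) 1,
      ((u * v + θ * P u v) + (v * u + θ * P v u)) / 2 = u * v := by
  have h01 : (0:ℝ) ∈ Icc (0:ℝ) 1 := ⟨le_refl 0, zero_le_one⟩
  have h11 : (1:ℝ) ∈ Icc (0:ℝ) 1 := ⟨zero_le_one, le_refl 1⟩
  have hP0r : ∀ u : ℝ, 0 ≤ u → P u 0 = 0 := fun u hu => by
    rw [P, min_eq_right hu]; ring
  have hP0l : ∀ v : ℝ, 0 ≤ v → P 0 v = 0 := fun v hv => by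
    rw [P, min_eq_left hv]; ring
  have hP1r : ∀ u : ℝ, u ≤ 1 → P u 1 = 0 := fun u hu => by
    rw [P, min_eq_right (by linarith : (1:ℝ) - 1 ≤ 1 - u)]; ring
  have hP1l : ∀ v : ℝ, v ≤ 1 → P 1 v = 0 := fun v hv => by
    rw [P, min_eq_left (by linarith : (1:ℝ) - 1 ≤ 1 - v)]; ring
  refine ⟨⟨?_, ?_, ?_, ?_, ?_, ?_⟩, ?_⟩
  · intro u hu; simp only; rw [hP0r u hu.1]; ring
  · intro v hv; simp only; rw [hP0l v hv.1]; ring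
  · intro u hu; simp only; rw [hP1r u hu.2]; ring
  · intro v hv; simp only; rw [hP1l v hv.2]; ring
  · intro u hu v hv
    constructor
    · have h := vol θ hθ 0 u 0 v h01 hu h01 hv hu.1 hv.1
      rw [hP0r u hu.1, hP0l v hv.1, hP0r 0 le_rfl] at h
      simp only; linarith
    · have h := vol θ hθ 0 u v 1 h01 hu hv h11 hu.1 hv.2
      rw [hP1r u hu.2, hP0l v hv.1, hP0l 1 zero_le_one] at h
      simp only; nlinarith [hu.2, hv.2]
  · intro u₁ hu₁ u₂ hu₂ v₁ hv₁ v₂ hv₂ hu hv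
    have h := vol θ hθ u₁ u₂ v₁ v₂ hu₁ hu₂ hv₁ hv₂ hu hv
    simp only; linarith
  · intro u _ v _
    rw [Pswap u v]; ring
end

section
/- For every θ ∈ [-1,1], the map Π + θQ, where Π(u,v)=uv and Q(u,v)=(u+v-1)·min(1-u,v)·min(u,1-v), is a bivariate copula whose radial symmetrization ((Π+θQ) + survival of (Π+θQ))/2 equals Π. -/
open Set

def Q (u v : ℝ) : ℝ := (u + v - 1) * min (1 - u) v * min u (1 - v)

lemma Q_piecewise {u v : ℝ} (hu0 : 0 ≤ u) (hu1 : u ≤ 1) (hv0 : 0 ≤ v) (hv1 : v ≤ 1) :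
    Q u v = if u + v ≤ 1 then (u + v - 1) * v * u else (u + v - 1) * (1 - u) * (1 - v) := by
  unfold Q
  split_ifs with h
  · rw [min_eq_right (by linarith), min_eq_left (by linarith)]
  · rw [min_eq_left (by linarith), min_eq_right (by linarith)]

set_option maxHeartbeats 1600000 in
lemma dQ_bounds {u₁ u₂ v₁ v₂ : ℝ}
    (h10 : 0 ≤ u₁) (h11 : u₁ ≤ 1) (h20 : 0 ≤ u₂) (h21 : u₂ ≤ 1)
    (k10 : 0 ≤ v₁) (k11 : v₁ ≤ 1) (k20 : 0 ≤ v₂) (k21 : v₂ ≤ 1)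
    (hu : u₁ ≤ u₂) (hv : v₁ ≤ v₂) :
    -((u₂ - u₁) * (v₂ - v₁)) ≤ Q u₂ v₂ - Q u₂ v₁ - Q u₁ v₂ + Q u₁ v₁ ∧
    Q u₂ v₂ - Q u₂ v₁ - Q u₁ v₂ + Q u₁ v₁ ≤ (u₂ - u₁) * (v₂ - v₁) := by
  have ha : (0:ℝ) ≤ u₂ - u₁ := by linarith
  have hb : (0:ℝ) ≤ v₂ - v₁ := by linarith
  have hab : (0:ℝ) ≤ (u₂ - u₁) * (v₂ - v₁) := mul_nonneg ha hb
  rw [Q_piecewise h20 h21 k20 k21, Q_piecewise h20 h21 k10 k11,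
      Q_piecewise h10 h11 k20 k21, Q_piecewise h10 h11 k10 k11]
  rcases le_or_gt (u₂ + v₂) 1 with p22 | p22 <;>
  rcases le_or_gt (u₂ + v₁) 1 with p21 | p21 <;>
  rcases le_or_gt (u₁ + v₂) 1 with p12 | p12 <;>
  rcases le_or_gt (u₁ + v₁) 1 with p11 | p11
  · rw [if_pos p22, if_pos p21, if_pos p12, if_pos p11]
    constructor <;>
      nlinarith [mul_nonneg hab (by linarith : (0:ℝ) ≤ u₁ + u₂ + v₁ + v₂),
        mul_nonneg hab (by linarith : (0:ℝ) ≤ 2 - (u₁ + u₂ + v₁ + v₂))]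
  · exact absurd p22 (by push_neg; linarith)
  · exact absurd p22 (by push_neg; linarith)
  · exact absurd p22 (by push_neg; linarith)
  · exact absurd p22 (by push_neg; linarith)
  · exact absurd p22 (by push_neg; linarith)
  · exact absurd p22 (by push_neg; linarith)
  · exact absurd p22 (by push_neg; linarith)
  · rw [if_neg (by linarith), if_pos p21, if_pos p12, if_pos p11]
    have hs0 : (0:ℝ) ≤ u₂ + v₂ - 1 := by linarith
    constructor
    · nlinarith [mul_nonneg (by linarith : (0:ℝ) ≤ u₂ - u₁ - (u₂ + v₂ - 1)) (by linarith : (0:ℝ) ≤ v₂ - v₁ - (u₂ + v₂ - 1)),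
        mul_nonneg hs0 (by linarith : (0:ℝ) ≤ u₂ - u₁ - (u₂ + v₂ - 1)),
        mul_nonneg hs0 (by linarith : (0:ℝ) ≤ v₂ - v₁ - (u₂ + v₂ - 1)),
        mul_nonneg hab (by linarith : (0:ℝ) ≤ u₁ + u₂ + v₁ + v₂ - 1)]
    · nlinarith [sq_nonneg (u₂ + v₂ - 1),
        mul_nonneg hab (by linarith : (0:ℝ) ≤ 2 - (u₁ + u₂ + v₁ + v₂))]
  · exact absurd p12 (by push_neg; linarith)
  · rw [if_neg (by linarith), if_pos p21, if_neg (by linarith), if_pos p11]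
    have hs12 : (0:ℝ) ≤ u₁ + v₂ - 1 := by linarith
    constructor
    · nlinarith [mul_nonneg ha (mul_nonneg (by linarith : (0:ℝ) ≤ 1 - (v₂ - v₁))
          (by linarith : (0:ℝ) ≤ 2 + (v₂ - v₁) - (u₁ + u₂ + v₁ + v₂))),
        mul_nonneg ha (sq_nonneg (v₂ - v₁)), mul_nonneg ha hs12,
        mul_nonneg (mul_nonneg ha hs12) hb]
    · nlinarith [mul_nonneg (mul_nonneg ha hb) (by linarith : (0:ℝ) ≤ 1 - u₂ - v₁),
        mul_nonneg ha (by linarith : (0:ℝ) ≤ u₂ + v₂ - 1),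
        mul_nonneg (mul_nonneg ha hs12) (by linarith : (0:ℝ) ≤ 1 - (v₂ - v₁))]
  · exact absurd p21 (by push_neg; linarith)
  · rw [if_neg (by linarith), if_neg (by linarith), if_pos p12, if_pos p11]
    have hs21 : (0:ℝ) ≤ u₂ + v₁ - 1 := by linarith
    constructor
    · nlinarith [mul_nonneg hb (mul_nonneg (by linarith : (0:ℝ) ≤ 1 - (u₂ - u₁))
          (by linarith : (0:ℝ) ≤ 2 + (u₂ - u₁) - (u₁ + u₂ + v₁ + v₂))),
        mul_nonneg hb (sq_nonneg (u₂ - u₁)), mul_nonneg hb hs21,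
        mul_nonneg (mul_nonneg hb hs21) ha]
    · nlinarith [mul_nonneg (mul_nonneg ha hb) (by linarith : (0:ℝ) ≤ 1 - u₁ - v₂),
        mul_nonneg hb (by linarith : (0:ℝ) ≤ u₂ + v₂ - 1),
        mul_nonneg (mul_nonneg hb hs21) (by linarith : (0:ℝ) ≤ 1 - (u₂ - u₁))]
  · exact absurd p12 (by push_neg; linarith)
  · rw [if_neg (by linarith), if_neg (by linarith), if_neg (by linarith), if_pos p11]
    have ht0 : (0:ℝ) ≤ 1 - u₁ - v₁ := by linarith
    constructor
    · nlinarith [sq_nonneg (1 - u₁ - v₁),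
        mul_nonneg hab (by linarith : (0:ℝ) ≤ u₁ + u₂ + v₁ + v₂ - 2)]
    · nlinarith [mul_nonneg (by linarith : (0:ℝ) ≤ u₂ - u₁ - (1 - u₁ - v₁)) (by linarith : (0:ℝ) ≤ v₂ - v₁ - (1 - u₁ - v₁)),
        mul_nonneg ht0 (by linarith : (0:ℝ) ≤ u₂ - u₁ - (1 - u₁ - v₁)),
        mul_nonneg ht0 (by linarith : (0:ℝ) ≤ v₂ - v₁ - (1 - u₁ - v₁)),
        mul_nonneg hab (by linarith : (0:ℝ) ≤ 3 - (u₁ + u₂ + v₁ + v₂))]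
  · rw [if_neg (by linarith), if_neg (by linarith), if_neg (by linarith), if_neg (by linarith)]
    constructor <;>
      nlinarith [mul_nonneg hab (by linarith : (0:ℝ) ≤ u₁ + u₂ + v₁ + v₂ - 2),
        mul_nonneg hab (by linarith : (0:ℝ) ≤ 4 - (u₁ + u₂ + v₁ + v₂))]

theorem stmt5 (θ : ℝ) (hθ : θ ∈ Icc (-1:ℝ) 1) :
    IsCopula (fun u v => u * v + θ * Q u v) ∧
    ∀ u ∈ Icc (0:ℝ) 1, ∀ v ∈ Icc (0:ℝ) 1,
      ((u * v + θ * Q u v) +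
        (u + v - 1 + ((1 - u) * (1 - v) + θ * Q (1 - u) (1 - v)))) / 2 = u * v := by
  obtain ⟨hθ1, hθ2⟩ := hθ
  have hinc : ∀ u₁ ∈ Icc (0:ℝ) 1, ∀ u₂ ∈ Icc (0:ℝ) 1, ∀ v₁ ∈ Icc (0:ℝ) 1, ∀ v₂ ∈ Icc (0:ℝ) 1,
      u₁ ≤ u₂ → v₁ ≤ v₂ → 0 ≤ (u₂ * v₂ + θ * Q u₂ v₂) - (u₂ * v₁ + θ * Q u₂ v₁)
        - (u₁ * v₂ + θ * Q u₁ v₂) + (u₁ * v₁ + θ * Q u₁ v₁) := by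
    rintro u₁ ⟨h10, h11⟩ u₂ ⟨h20, h21⟩ v₁ ⟨k10, k11⟩ v₂ ⟨k20, k21⟩ hu hv
    obtain ⟨hb1, hb2⟩ := dQ_bounds h10 h11 h20 h21 k10 k11 k20 k21 hu hv
    set D := Q u₂ v₂ - Q u₂ v₁ - Q u₁ v₂ + Q u₁ v₁ with hD
    have heq : (u₂ * v₂ + θ * Q u₂ v₂) - (u₂ * v₁ + θ * Q u₂ v₁)
        - (u₁ * v₂ + θ * Q u₁ v₂) + (u₁ * v₁ + θ * Q u₁ v₁)
        = (u₂ - u₁) * (v₂ - v₁) + θ * D := by rw [hD]; ring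
    rw [heq]
    rcases le_total 0 D with hd | hd
    · nlinarith [mul_nonneg (by linarith : (0:ℝ) ≤ θ + 1) hd]
    · nlinarith [mul_nonpos_of_nonpos_of_nonneg hd (by linarith : (0:ℝ) ≤ 1 - θ)]
  have hQu0 : ∀ u : ℝ, u ≤ 1 → Q u 0 = 0 := by
    intro u hu; unfold Q
    rw [min_eq_right (by linarith : (0:ℝ) ≤ 1 - u)]; ring
  have hQ0v : ∀ v : ℝ, v ≤ 1 → Q 0 v = 0 := by
    intro v hv; unfold Q
    rw [min_eq_left (by linarith : (0:ℝ) ≤ 1 - v)]; ring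
  have hQu1 : ∀ u : ℝ, 0 ≤ u → Q u 1 = 0 := by
    intro u hu; unfold Q
    rw [show (1:ℝ) - 1 = 0 by ring, min_eq_right hu]; ring
  have hQ1v : ∀ v : ℝ, 0 ≤ v → Q 1 v = 0 := by
    intro v hv; unfold Q
    rw [show (1:ℝ) - 1 = 0 by ring, min_eq_left hv]; ring
  refine ⟨⟨?_, ?_, ?_, ?_, ?_, ?_⟩, ?_⟩
  · rintro u ⟨hu0, hu1⟩; simp [hQu0 u hu1]
  · rintro v ⟨hv0, hv1⟩; simp [hQ0v v hv1]
  · rintro u ⟨hu0, hu1⟩; simp [hQu1 u hu0]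
  · rintro v ⟨hv0, hv1⟩; simp [hQ1v v hv0]
  · rintro u ⟨hu0, hu1⟩ v ⟨hv0, hv1⟩
    constructor
    · have := hinc 0 ⟨le_refl 0, zero_le_one⟩ u ⟨hu0, hu1⟩ 0 ⟨le_refl 0, zero_le_one⟩ v ⟨hv0, hv1⟩ hu0 hv0
      have e1 := hQu0 u hu1
      have e2 := hQ0v v hv1
      have e3 := hQu0 0 zero_le_one
      simp only at this ⊢
      nlinarith
    · have := hinc 0 ⟨le_refl 0, zero_le_one⟩ u ⟨hu0, hu1⟩ v ⟨hv0, hv1⟩ 1 ⟨zero_le_one, le_refl 1⟩ hu0 hv1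
      have e1 := hQu1 u hu0
      have e2 := hQ0v v hv1
      have e3 := hQ0v 1 le_rfl
      simp only at this ⊢
      nlinarith
  · exact hinc
  · rintro u ⟨hu0, hu1⟩ v ⟨hv0, hv1⟩
    have h1 : Q (1 - u) (1 - v) = - Q u v := by
      unfold Q
      rw [show (1:ℝ) - (1 - u) = u by ring, show (1:ℝ) - (1 - v) = v by ring]
      ring
    rw [h1]; ring
end

section
/- For any bivariate copula C, the symmetrization C_S=(C+Cᵀ)/2 is a best approximation of C by symmetric copulas in the uniform norm: for every symmetric copula S, ‖C − C_S‖_∞ ≤ ‖C − S‖_∞. -/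
open Set

theorem stmt11 (C S : ℝ → ℝ → ℝ) (hC : IsCopula C) (hS : IsCopula S)
    (hSsym : ∀ u ∈ Icc (0:ℝ) 1, ∀ v ∈ Icc (0:ℝ) 1, S u v = S v u) :
    (⨆ u : Icc (0:ℝ) 1, ⨆ v : Icc (0:ℝ) 1,
        |C u v - (C u v + C v u) / 2|) ≤
    (⨆ u : Icc (0:ℝ) 1, ⨆ v : Icc (0:ℝ) 1, |C u v - S u v|) := by
  obtain ⟨-, -, -, -, hCb, -⟩ := hC
  obtain ⟨-, -, -, -, hSb, -⟩ := hS
  have hbd : ∀ u v : Icc (0:ℝ) 1, |C u v - S u v| ≤ 1 := by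
    intro u v
    have h1 := hCb u u.2 v v.2
    have h2 := hSb u u.2 v v.2
    rw [abs_le]
    constructor <;> [linarith [h1.1, h2.2]; linarith [h1.2, h2.1]]
  have hinner : ∀ u : Icc (0:ℝ) 1,
      (⨆ v : Icc (0:ℝ) 1, |C u v - S u v|) ≤ 1 :=
    fun u => ciSup_le fun v => hbd u v
  have key : ∀ u v : Icc (0:ℝ) 1, |C u v - S u v| ≤
      ⨆ u : Icc (0:ℝ) 1, ⨆ v : Icc (0:ℝ) 1, |C u v - S u v| := by
    intro u v
    calc |C u v - S u v| ≤ ⨆ v : Icc (0:ℝ) 1, |C u v - S u v| :=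
          le_ciSup ⟨1, Set.forall_mem_range.2 (hbd u)⟩ v
      _ ≤ _ := le_ciSup ⟨1, Set.forall_mem_range.2 hinner⟩ u
  refine ciSup_le fun u => ciSup_le fun v => ?_
  have h1 := key u v
  have h2 := key v u
  have hs := hSsym u u.2 v v.2
  have e : C u v - (C u v + C v u) / 2 = (C u v - C v u) / 2 := by ring
  rw [e, abs_div, abs_two]
  have htri : |C u v - C v u| ≤ |C u v - S u v| + |S v u - C v u| := by
    rw [← hs]
    exact (abs_sub_le _ _ _)
  rw [abs_sub_comm (S v u)] at htri
  linarith
end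

section
/- For any bivariate copula C, the radial symmetrization C_R=(C+Ĉ)/2 is a best approximation of C by radially symmetric copulas in the uniform norm: for every radially symmetric copula R, ‖C − C_R‖_∞ ≤ ‖C − R‖_∞. -/
open Set

theorem stmt12 (C R : ℝ → ℝ → ℝ) (hC : IsCopula C) (hR : IsCopula R)
    (hRrad : ∀ u ∈ Icc (0:ℝ) 1, ∀ v ∈ Icc (0:ℝ) 1,
      R u v = u + v - 1 + R (1 - u) (1 - v)) :
    (⨆ u : Icc (0:ℝ) 1, ⨆ v : Icc (0:ℝ) 1,
        |C u v - (C u v + (u + v - 1 + C (1 - u.1) (1 - v.1))) / 2|) ≤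
    (⨆ u : Icc (0:ℝ) 1, ⨆ v : Icc (0:ℝ) 1, |C u v - R u v|) := by
  obtain ⟨-, -, -, -, hCmem, -⟩ := hC
  obtain ⟨-, -, -, -, hRmem, -⟩ := hR
  set f : Icc (0:ℝ) 1 → Icc (0:ℝ) 1 → ℝ := fun u v => |C u v - R u v| with hf
  have hfb : ∀ u v, f u v ≤ 1 := by
    intro u v
    have h1 := hCmem u u.2 v v.2
    have h2 := hRmem u u.2 v v.2
    rw [abs_le]
    constructor <;> linarith [h1.1, h1.2, h2.1, h2.2]
  have hbdd : ∀ u, BddAbove (Set.range (f u)) := fun u => ⟨1, by rintro x ⟨v, rfl⟩; exact hfb u v⟩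
  have hbdd2 : BddAbove (Set.range (fun u => ⨆ v, f u v)) := by
    refine ⟨1, ?_⟩
    rintro x ⟨u, rfl⟩
    exact ciSup_le (hfb u)
  have hle : ∀ u v, f u v ≤ ⨆ u, ⨆ v, f u v := by
    intro u v
    exact le_trans (le_ciSup (hbdd u) v) (le_ciSup hbdd2 u)
  refine ciSup_le fun u => ciSup_le fun v => ?_
  have hu' : (1 - u.1) ∈ Icc (0:ℝ) 1 := ⟨by linarith [u.2.2], by linarith [u.2.1]⟩
  have hv' : (1 - v.1) ∈ Icc (0:ℝ) 1 := ⟨by linarith [v.2.2], by linarith [v.2.1]⟩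
  have hrad := hRrad u u.2 v v.2
  have key : C u v - (C u v + (u.1 + v.1 - 1 + C (1 - u.1) (1 - v.1))) / 2
      = ((C u v - R u v) - (C (1 - u.1) (1 - v.1) - R (1 - u.1) (1 - v.1))) / 2 := by
    field_simp
    linarith [hrad]
  rw [key]
  have h1 : f u v ≤ ⨆ u, ⨆ v, f u v := hle u v
  have h2 : f ⟨1 - u.1, hu'⟩ ⟨1 - v.1, hv'⟩ ≤ ⨆ u, ⨆ v, f u v := hle _ _
  simp only [hf] at h1 h2
  calc |((C u v - R u v) - (C (1 - u.1) (1 - v.1) - R (1 - u.1) (1 - v.1))) / 2|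
      ≤ (|C u v - R u v| + |C (1 - u.1) (1 - v.1) - R (1 - u.1) (1 - v.1)|) / 2 := by
        rw [abs_div]
        simp only [abs_two]
        gcongr
        exact abs_sub _ _
    _ ≤ _ := by linarith [h1, h2]
end
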